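/- Let p = 2q+1 with p, q primes, a₀ a primitive root mod p, gcd(a₀b₀, q)=1, and a₀^n ≡ b₀ (mod p) with 0 ≤ n < p−1. If m is the unique residue modulo q with a₀^(m·φ(q)) ≡ b₀^(φ(q)) (mod pq), then n ≡ m (mod q), i.e., n = m or n = m + q. -/

import Mathlib

/-!
Reducing `a₀ ^ (m φ(q)) ≡ b₀ ^ φ(q) (mod pq)` modulo `p` and substituting `b₀ ≡ a₀ ^ n` gives
`a₀ ^ (m φ(q)) ≡ a₀ ^ (n φ(q)) (mod p)`. Since `a₀` has order `p - 1 = 2q`, the exponents agree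
modulo `2q`, hence modulo `q`; and `φ(q) = q - 1` is invertible modulo `q`, so `m ≡ n (mod q)`.
-/

theorem IsPrimitiveRoot.pow_eq_pow_iff_modEq {M : Type*} [CommMonoid M] {ζ : M} {k i j : ℕ}
    (h : IsPrimitiveRoot ζ k) (hk : k ≠ 0) : ζ ^ i = ζ ^ j ↔ i ≡ j [MOD k] := by
  rw [h.eq_orderOf]
  exact (h.isOfFinOrder hk).pow_eq_pow_iff_modEq

theorem Nat.ModEq.of_pow_modEq_of_isPrimitiveRoot {p k a i j : ℕ}
    (h : IsPrimitiveRoot (a : ZMod p) k) (hk : k ≠ 0) (hij : a ^ i ≡ a ^ j [MOD p]) :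
    i ≡ j [MOD k] := by
  rw [← h.pow_eq_pow_iff_modEq hk]
  exact_mod_cast (ZMod.natCast_eq_natCast_iff _ _ _).mpr hij

theorem Nat.Prime.coprime_totient {q : ℕ} (hq : q.Prime) : Nat.Coprime q q.totient := by
  rw [Nat.totient_prime hq, Nat.coprime_self_sub_right hq.one_le]
  exact Nat.coprime_one_right q

theorem Nat.ModEq.eq_or_eq_add_of_lt_two_mul {q n m : ℕ} (h : n ≡ m [MOD q]) (hn : n < 2 * q)
    (hm : m < q) : n = m ∨ n = m + q := by
  have hmod : n % q = m := (Nat.mod_eq_of_lt hm) ▸ h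
  have hdiv : n / q < 2 := Nat.div_lt_of_lt_mul (by rwa [mul_comm])
  have hdecomp := Nat.div_add_mod n q
  interval_cases hd : n / q <;> omega

theorem stmt_14_general (p q : ℕ) (hq : q.Prime) (hpq : p = 2 * q + 1)
    (a₀ b₀ n m : ℕ) (hroot : IsPrimitiveRoot (a₀ : ZMod p) (p - 1))
    (hn : a₀ ^ n ≡ b₀ [MOD p]) (hnlt : n < p - 1) (hm : m < q)
    (hmeq : a₀ ^ (m * q.totient) ≡ b₀ ^ q.totient [MOD p * q]) :
    n ≡ m [MOD q] ∧ (n = m ∨ n = m + q) := by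
  have hp : p - 1 = 2 * q := by omega
  rw [hp] at hroot hnlt
  have hpow : a₀ ^ (m * q.totient) ≡ a₀ ^ (n * q.totient) [MOD p] :=
    calc a₀ ^ (m * q.totient) ≡ b₀ ^ q.totient [MOD p] := hmeq.of_mul_right q
      _ ≡ (a₀ ^ n) ^ q.totient [MOD p] := (hn.pow _).symm
      _ = a₀ ^ (n * q.totient) := by rw [pow_mul]
  have hexp : m * q.totient ≡ n * q.totient [MOD q] :=
    (hpow.of_pow_modEq_of_isPrimitiveRoot hroot (by linarith [hq.two_le])).of_mul_left 2
  have hmn : n ≡ m [MOD q] := (hexp.cancel_right_of_coprime hq.coprime_totient).symm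
  exact ⟨hmn, hmn.eq_or_eq_add_of_lt_two_mul hnlt hm⟩

theorem stmt_14 (p q : ℕ) (hp : p.Prime) (hq : q.Prime) (hpq : p = 2 * q + 1)
    (a₀ b₀ n m : ℕ) (hroot : IsPrimitiveRoot (a₀ : ZMod p) (p - 1))
    (hab : Nat.Coprime (a₀ * b₀) q)
    (hn : a₀ ^ n ≡ b₀ [MOD p]) (hnlt : n < p - 1) (hm : m < q)
    (hmeq : a₀ ^ (m * q.totient) ≡ b₀ ^ q.totient [MOD p * q]) :
    n ≡ m [MOD q] ∧ (n = m ∨ n = m + q) :=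
  stmt_14_general p q hq hpq a₀ b₀ n m hroot hn hnlt hm hmeq
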